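/- For n ≥ 2, p ∈ (0,1) and all θ ≤ 0, the moment generating function M(θ) = E exp(θ(Y-μ)/σ) of the standardized number of isolated vertices satisfies M(θ) ≤ exp(μθ²/σ²). -/

import Mathlib

open MeasureTheory ProbabilityTheory Real Finset

noncomputable section

namespace ErdosRenyiIsolated

/-- Index set for the potential edges of a graph on `Fin n`. -/
abbrev EdgeIdx (n : ℕ) := {e : Fin n × Fin n // e.1 < e.2}

/-- Adjacency relation of the random graph encoded by `ω` : `u` and `v` are adjacent
if the corresponding edge indicator is `true`. -/
def adj {n : ℕ} (ω : EdgeIdx n → Bool) (u v : Fin n) : Prop :=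
  if h : u < v then ω ⟨(u, v), h⟩ = true
  else if h' : v < u then ω ⟨(v, u), h'⟩ = true
  else False

instance {n : ℕ} (ω : EdgeIdx n → Bool) (u v : Fin n) : Decidable (adj ω u v) := by
  unfold adj
  split
  · exact inferInstance
  · split
    · exact inferInstance
    · exact inferInstance

/-- Degree of vertex `v` in the graph encoded by `ω`. -/
def deg {n : ℕ} (ω : EdgeIdx n → Bool) (v : Fin n) : ℕ :=
  (Finset.univ.filter fun w => adj ω v w).card

/-- The number of isolated vertices of the graph encoded by `ω`. -/
def isolCount {n : ℕ} (ω : EdgeIdx n → Bool) : ℕ :=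
  (Finset.univ.filter fun v => deg ω v = 0).card

/-- The Bernoulli(p) measure on `Bool`. -/
def bern (p : ℝ) : Measure Bool :=
  ENNReal.ofReal p • Measure.dirac true + ENNReal.ofReal (1 - p) • Measure.dirac false

instance (p : ℝ) : IsFiniteMeasure (bern p) := by
  constructor
  have h : bern p Set.univ ≤ ENNReal.ofReal p + ENNReal.ofReal (1 - p) := by
    simp [bern]
  exact lt_of_le_of_lt h (ENNReal.add_lt_top.mpr ⟨ENNReal.ofReal_lt_top, ENNReal.ofReal_lt_top⟩)

/-- The Erdős–Rényi random graph measure `G(n,p)`: the edge indicators are i.i.d.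
Bernoulli(p). -/
def gnp (n : ℕ) (p : ℝ) : Measure (EdgeIdx n → Bool) :=
  Measure.pi fun _ => bern p

/-- The Erdős–Rényi measure together with an independent uniformly chosen vertex. -/
def gnpV (n : ℕ) (p : ℝ) : Measure ((EdgeIdx n → Bool) × Fin n) :=
  (gnp n p).prod (uniformOn (Set.univ : Set (Fin n)))

/-- Adjacency in the graph obtained by deleting all edges incident to `v'`. -/
def adjDel {n : ℕ} (ω : EdgeIdx n → Bool) (v' u v : Fin n) : Prop :=
  adj ω u v ∧ u ≠ v' ∧ v ≠ v'

instance {n : ℕ} (ω : EdgeIdx n → Bool) (v' u v : Fin n) : Decidable (adjDel ω v' u v) := by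
  unfold adjDel; exact inferInstance

/-- Degree of `v` in the graph `ω` with all edges incident to `v'` deleted. -/
def degDel {n : ℕ} (ω : EdgeIdx n → Bool) (v' v : Fin n) : ℕ :=
  (Finset.univ.filter fun w => adjDel ω v' v w).card

/-- Number of isolated vertices in the graph `ω` with all edges incident to `v'` deleted. -/
def isolCountDel {n : ℕ} (ω : EdgeIdx n → Bool) (v' : Fin n) : ℕ :=
  (Finset.univ.filter fun v => degDel ω v' v = 0).card

end ErdosRenyiIsolated

/-!
Size-biasing. Write `Y = ∑ᵥ 1{deg v = 0}` and let `Yᵥ` count the isolated vertices once the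
edges at `v` are deleted. `Yᵥ` is a function of the edges not at `v`, hence independent of the
event `{deg v = 0}`, on which it equals `Y`; therefore
`E[Y f(Y)] = (1 - p)^(n-1) ∑ᵥ E[f(Yᵥ)]`.
Deleting the edges at `v` isolates only `v` and its neighbours of degree one, and every vertex of
degree one is the neighbour of a single vertex, so `∑ᵥ (Yᵥ - Y) ≤ 2n`. For `s ≤ 0`, taking
`f(y) = e^{sy}` and using `eˣ ≥ 1 + x` gives `m'(s) ≥ μ (1 + 2s) m(s)` for the mgf `m` of `Y`.
Integrating this from `s` to `0` yields `m(s) ≤ exp(μ s + μ s²)`, and `s = θ/σ` is the claim.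
-/

lemma le_mul_exp_of_hasDerivAt {f f' : ℝ → ℝ} (hf : ∀ t, HasDerivAt f (f' t) t) {a b : ℝ}
    (h : ∀ t ≤ 0, (a + 2 * b * t) * f t ≤ f' t) {t : ℝ} (ht : t ≤ 0) :
    f t ≤ f 0 * exp (a * t + b * t ^ 2) := by
  set g : ℝ → ℝ := fun t ↦ f t * exp (-(a * t + b * t ^ 2))
  have hg : ∀ t, HasDerivAt g ((f' t - (a + 2 * b * t) * f t) * exp (-(a * t + b * t ^ 2))) t :=
    fun t ↦ by
      have hq : HasDerivAt (fun t ↦ -(a * t + b * t ^ 2)) (-(a + 2 * b * t)) t :=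
        (((hasDerivAt_id' t).const_mul a).add ((hasDerivAt_pow 2 t).const_mul b)).neg.congr_deriv
          (by push_cast; ring)
      exact ((hf t).mul hq.exp).congr_deriv (by ring)
  have hmono : MonotoneOn g (Set.Iic 0) := by
    refine monotoneOn_of_deriv_nonneg (convex_Iic 0)
      (fun t _ ↦ (hg t).continuousAt.continuousWithinAt)
      (fun t _ ↦ (hg t).differentiableAt.differentiableWithinAt) fun t ht ↦ ?_
    rw [(hg t).deriv]
    rw [interior_Iic] at ht
    exact mul_nonneg (sub_nonneg.2 (h t (le_of_lt ht))) (exp_pos _).le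
  have hgt : g t ≤ f 0 := by
    simpa [g] using hmono ht (Set.mem_Iic.2 le_rfl) ht
  calc f t = g t * exp (a * t + b * t ^ 2) := by
        simp only [g, mul_assoc, ← exp_add, neg_add_cancel, exp_zero, mul_one]
    _ ≤ f 0 * exp (a * t + b * t ^ 2) := by gcongr

lemma card_add_mul_mul_exp_le_sum_exp {ι : Type*} [Fintype ι] {t x c : ℝ} (ht : t ≤ 0)
    (z : ι → ℝ) (hz : ∑ i, (z i - x) ≤ c) :
    (Fintype.card ι + t * c) * exp (t * x) ≤ ∑ i, exp (t * z i) := by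
  calc (Fintype.card ι + t * c) * exp (t * x)
      ≤ (Fintype.card ι + t * ∑ i, (z i - x)) * exp (t * x) := by
        have := mul_le_mul_of_nonpos_left hz ht
        gcongr
    _ = ∑ i, exp (t * x) * (t * (z i - x) + 1) := by
        simp only [mul_add, sum_add_distrib, ← mul_sum, mul_one, sum_const, card_univ,
          nsmul_eq_mul]
        ring
    _ ≤ ∑ i, exp (t * z i) := sum_le_sum fun i _ ↦ by
        rw [show t * z i = t * x + t * (z i - x) by ring, exp_add]
        gcongr
        exact add_one_le_exp _

section Mgf

variable {Ω : Type*} [MeasurableSpace Ω] {μ : Measure Ω} [IsProbabilityMeasure μ]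
  {X : Ω → ℝ}

lemma mgf_le_exp_of_le_integral_mul_exp (hX : ∀ t, Integrable (fun ω ↦ exp (t * X ω)) μ)
    {m : ℝ}
    (h : ∀ s ≤ 0, m * (1 + 2 * s) * mgf X μ s ≤ μ[fun ω ↦ X ω * exp (s * X ω)])
    {s : ℝ} (hs : s ≤ 0) : mgf X μ s ≤ exp (m * s + m * s ^ 2) := by
  have hint : ∀ t, t ∈ interior (integrableExpSet X μ) := fun t ↦ by
    simp [integrableExpSet, hX]
  simpa using le_mul_exp_of_hasDerivAt (fun t ↦ hasDerivAt_mgf (hint t))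
    (fun t ht ↦ by linarith [h t ht]) hs

end Mgf

namespace ErdosRenyiIsolated

variable {n : ℕ}

def incidentEdges (v : Fin n) : Finset (EdgeIdx n) := {e | e.1.1 = v ∨ e.1.2 = v}

lemma card_incidentEdges (v : Fin n) : #(incidentEdges v) = n - 1 := by
  have : #(incidentEdges v) = #(univ.erase v) := by
    refine card_bij' (fun e _ ↦ if e.1.1 = v then e.1.2 else e.1.1)
      (fun w hw ↦ if h : v < w then ⟨(v, w), h⟩
        else ⟨(w, v), lt_of_le_of_ne (not_lt.1 h) (ne_of_mem_erase hw)⟩) ?_ ?_ ?_ ?_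
    · rintro e he
      simp only [incidentEdges, mem_filter, mem_univ, true_and] at he
      have := e.2
      split_ifs with h <;> simp only [mem_erase, mem_univ, and_true] <;> grind
    · intro w _
      split_ifs <;> simp [incidentEdges]
    · rintro e he
      simp only [incidentEdges, mem_filter, mem_univ, true_and] at he
      have := e.2
      split_ifs <;> apply Subtype.ext <;> grind
    · intro w hw
      split_ifs <;> simp_all
  simp [this]

section Combinatorics

variable (ω : EdgeIdx n → Bool)

lemma adj_comm (u v : Fin n) : adj ω u v ↔ adj ω v u := by
  unfold adj
  rcases lt_trichotomy u v with h | rfl | h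
  · simp [h, h.not_gt]
  · simp
  · simp [h, h.not_gt]

lemma adj_fst_snd (e : EdgeIdx n) : adj ω e.1.1 e.1.2 ↔ ω e = true := by
  simp [adj, e.2]

lemma deg_eq_zero_iff (v : Fin n) : deg ω v = 0 ↔ ∀ e ∈ incidentEdges v, ω e = false := by
  simp only [deg, card_eq_zero, filter_eq_empty_iff, mem_univ, true_implies, incidentEdges,
    mem_filter, true_and, Bool.eq_false_iff, ne_eq]
  constructor
  · rintro h e (rfl | rfl) he
    · exact h ((adj_fst_snd ω e).2 he)
    · exact h ((adj_comm ω _ _).1 ((adj_fst_snd ω e).2 he))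
  · intro h w hw
    unfold adj at hw
    split_ifs at hw
    · exact h _ (Or.inl rfl) hw
    · exact h _ (Or.inr rfl) hw

variable {ω}

lemma adj_congr_of_eqOn {ω' : EdgeIdx n → Bool} {v : Fin n}
    (h : ∀ e ∉ incidentEdges v, ω e = ω' e) {u w : Fin n} (hu : u ≠ v) (hw : w ≠ v) :
    adj ω u w ↔ adj ω' u w := by
  unfold adj
  split_ifs
  · rw [h _ (by simp [incidentEdges, hu, hw])]
  · rw [h _ (by simp [incidentEdges, hu, hw])]
  · rfl

lemma isolCountDel_congr {ω' : EdgeIdx n → Bool} {v : Fin n}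
    (h : ∀ e ∉ incidentEdges v, ω e = ω' e) : isolCountDel ω v = isolCountDel ω' v := by
  have hadj : ∀ u w, adjDel ω v u w ↔ adjDel ω' v u w := fun u w ↦ by
    by_cases hu : u = v
    · simp [adjDel, hu]
    by_cases hw : w = v
    · simp [adjDel, hw]
    simp only [adjDel, adj_congr_of_eqOn h hu hw]
  simp [isolCountDel, degDel, hadj]

lemma isolCount_eq_isolCountDel {v : Fin n} (h : deg ω v = 0) :
    isolCount ω = isolCountDel ω v := by
  have hv : ∀ w, ¬ adj ω v w := by simpa [deg, filter_eq_empty_iff] using h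
  have hadj : ∀ u w, adjDel ω v u w ↔ adj ω u w := fun u w ↦ by
    refine ⟨And.left, fun huw ↦ ⟨huw, ?_, ?_⟩⟩
    · rintro rfl; exact hv w huw
    · rintro rfl; exact hv u ((adj_comm ω _ _).1 huw)
  simp [isolCount, deg, isolCountDel, degDel, hadj]

variable (ω)

def pendantNeighbors (v : Fin n) : Finset (Fin n) := {w | deg ω w = 1 ∧ adj ω v w}

lemma mem_pendantNeighbors_of_degDel_eq_zero {v w : Fin n} (hw : degDel ω v w = 0)
    (hwv : w ≠ v) (h0 : deg ω w ≠ 0) : w ∈ pendantNeighbors ω v := by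
  have hnbr : ({u | adj ω w u} : Finset (Fin n)) ⊆ {v} := by
    intro u hu
    by_contra huv
    simp only [mem_filter, mem_univ, true_and, mem_singleton] at hu huv
    simp only [degDel, card_eq_zero, filter_eq_empty_iff] at hw
    exact hw (mem_univ u) ⟨hu, hwv, huv⟩
  have hne : ({u | adj ω w u} : Finset (Fin n)).Nonempty := card_pos.1 (Nat.pos_of_ne_zero h0)
  have hv : ({u | adj ω w u} : Finset (Fin n)) = {v} :=
    (hne.subset_singleton_iff (a := v)).1 hnbr
  refine mem_filter.2 ⟨mem_univ w, by simp [deg, hv], (adj_comm ω _ _).1 ?_⟩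
  simpa using hv.ge (mem_singleton_self v)

lemma isolCountDel_le (v : Fin n) :
    isolCountDel ω v ≤ isolCount ω + 1 + #(pendantNeighbors ω v) := by
  set iso : Finset (Fin n) := {w | deg ω w = 0}
  have hsub : ({w | degDel ω v w = 0} : Finset (Fin n)) ⊆
      iso ∪ {v} ∪ pendantNeighbors ω v := by
    intro w hw
    simp only [iso, mem_union, mem_filter, mem_univ, true_and, mem_singleton] at hw ⊢
    by_cases h0 : deg ω w = 0
    · exact Or.inl (Or.inl h0)
    by_cases hwv : w = v
    · exact Or.inl (Or.inr hwv)
    exact Or.inr (mem_pendantNeighbors_of_degDel_eq_zero ω hw hwv h0)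
  calc isolCountDel ω v ≤ #(iso ∪ {v} ∪ pendantNeighbors ω v) := card_le_card hsub
    _ ≤ #iso + #{v} + #(pendantNeighbors ω v) :=
        (card_union_le _ _).trans (by grw [card_union_le])
    _ = isolCount ω + 1 + #(pendantNeighbors ω v) := by rw [card_singleton]; rfl

lemma sum_card_pendantNeighbors_le : ∑ v, #(pendantNeighbors ω v) ≤ n := by
  calc ∑ v, #(pendantNeighbors ω v)
      = ∑ w, #({v | deg ω w = 1 ∧ adj ω v w} : Finset (Fin n)) := by
        simp only [pendantNeighbors, card_filter]
        exact sum_comm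
    _ ≤ ∑ _w : Fin n, 1 := by
        gcongr with w
        by_cases h1 : deg ω w = 1
        · simp only [h1, true_and, adj_comm ω _ w]
          exact h1.le
        · simp [h1]
    _ = n := by simp

lemma sum_isolCountDel_le : ∑ v, isolCountDel ω v ≤ n * isolCount ω + 2 * n := by
  calc ∑ v, isolCountDel ω v ≤ ∑ v, (isolCount ω + 1 + #(pendantNeighbors ω v)) :=
        sum_le_sum fun v _ ↦ isolCountDel_le ω v
    _ ≤ n * isolCount ω + 2 * n := by
        have := sum_card_pendantNeighbors_le ω
        simp only [sum_add_distrib, sum_const, card_univ, Fintype.card_fin, smul_eq_mul]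
        linarith

end Combinatorics

section Probability

variable {p : ℝ}

lemma isProbabilityMeasure_bern (hp : p ∈ Set.Icc 0 1) : IsProbabilityMeasure (bern p) :=
  ⟨by simp [bern, ← ENNReal.ofReal_add hp.1 (sub_nonneg.2 hp.2)]⟩

lemma isProbabilityMeasure_gnp (hp : p ∈ Set.Icc 0 1) : IsProbabilityMeasure (gnp n p) :=
  have := isProbabilityMeasure_bern hp
  inferInstanceAs (IsProbabilityMeasure (Measure.pi _))

lemma gnp_real_deg_eq_zero (hp : p ∈ Set.Icc 0 1) (v : Fin n) :
    (gnp n p).real {ω | deg ω v = 0} = (1 - p) ^ (n - 1) := by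
  have := isProbabilityMeasure_bern hp
  have hset : {ω | deg ω v = 0} =
      Set.univ.pi fun e ↦ if e ∈ incidentEdges v then {false} else Set.univ := by
    ext ω
    simp only [deg_eq_zero_iff, Set.mem_ofPred_eq, Set.mem_pi, Set.mem_univ, true_implies]
    refine forall_congr' fun e ↦ ?_
    split_ifs <;> simp [*]
  rw [measureReal_def, hset, gnp, Measure.pi_pi]
  simp only [apply_ite, measure_univ]
  rw [prod_ite_mem, univ_inter, prod_const, card_incidentEdges]
  simp [bern, ENNReal.toReal_ofReal (sub_nonneg.2 hp.2)]

lemma integral_ite_deg_eq_zero (hp : p ∈ Set.Icc 0 1) (v : Fin n)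
    {G : (EdgeIdx n → Bool) → ℝ}
    (hG : ∀ ω ω', (∀ e ∉ incidentEdges v, ω e = ω' e) → G ω = G ω') :
    ∫ ω, (if deg ω v = 0 then G ω else 0) ∂gnp n p
      = (1 - p) ^ (n - 1) * ∫ ω, G ω ∂gnp n p := by
  have := isProbabilityMeasure_bern hp
  set S := incidentEdges v
  set T := Sᶜ
  have hindep : IndepFun (fun ω (e : S) ↦ ω e) (fun ω (e : T) ↦ ω e) (gnp n p) :=
    (iIndepFun_pi (X := fun _ ↦ id) fun _ ↦ aemeasurable_id).indepFun_finset S T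
      disjoint_compl_right fun _ ↦ measurable_pi_apply _
  let φ : (S → Bool) → ℝ := fun a ↦ if ∀ e, a e = false then 1 else 0
  let extend : (T → Bool) → EdgeIdx n → Bool := fun b e ↦
    if h : e ∈ T then b ⟨e, h⟩ else false
  have hext (ω : EdgeIdx n → Bool) : G (extend fun e ↦ ω e) = G ω :=
    hG _ _ fun e he ↦ by simp [extend, T, he]
  have hφ (ω : EdgeIdx n → Bool) :
      φ (fun e : S ↦ ω e) = Set.indicator {ω | deg ω v = 0} 1 ω := by
    simp [φ, Set.indicator, deg_eq_zero_iff, S]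
  have hprod := (hindep.comp (measurable_of_finite φ) (measurable_of_finite (G ∘ extend))
    ).integral_fun_mul_eq_mul_integral (measurable_of_finite _).aestronglyMeasurable
    (measurable_of_finite _).aestronglyMeasurable
  simp only [Function.comp_def] at hprod
  calc ∫ ω, (if deg ω v = 0 then G ω else 0) ∂gnp n p
      = ∫ ω, φ (fun e : S ↦ ω e) * G (extend fun e ↦ ω e) ∂gnp n p := by
        simp only [hext, hφ, Set.indicator, Set.mem_ofPred_eq, Pi.one_apply, ite_mul, one_mul,
          zero_mul]
    _ = (∫ ω, φ (fun e : S ↦ ω e) ∂gnp n p) *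
          ∫ ω, G (extend fun e ↦ ω e) ∂gnp n p := hprod
    _ = (1 - p) ^ (n - 1) * ∫ ω, G ω ∂gnp n p := by
        simp only [hext, hφ, integral_indicator_one (MeasurableSet.of_discrete),
          gnp_real_deg_eq_zero hp]

lemma integral_isolCount_mul (hp : p ∈ Set.Icc 0 1) (F : ℕ → ℝ) :
    ∫ ω, (isolCount ω : ℝ) * F (isolCount ω) ∂gnp n p
      = (1 - p) ^ (n - 1) * ∑ v, ∫ ω, F (isolCountDel ω v) ∂gnp n p := by
  have := isProbabilityMeasure_gnp (n := n) hp
  have hsplit (ω : EdgeIdx n → Bool) : (isolCount ω : ℝ) * F (isolCount ω)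
      = ∑ v, if deg ω v = 0 then F (isolCountDel ω v) else 0 := by
    calc (isolCount ω : ℝ) * F (isolCount ω) = ∑ v with deg ω v = 0, F (isolCount ω) := by
          simp [isolCount]
      _ = ∑ v with deg ω v = 0, F (isolCountDel ω v) :=
          sum_congr rfl fun v hv ↦ by rw [isolCount_eq_isolCountDel (mem_filter.1 hv).2]
      _ = _ := sum_filter _ _
  simp only [hsplit]
  rw [integral_finsetSum _ fun _ _ ↦ Integrable.of_finite, mul_sum]
  exact sum_congr rfl fun v _ ↦
    integral_ite_deg_eq_zero hp v fun ω ω' h ↦ congrArg F (isolCountDel_congr h)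

lemma mul_mgf_isolCount_le (hp : p ∈ Set.Icc 0 1) {s : ℝ} (hs : s ≤ 0) :
    n * (1 - p) ^ (n - 1) * (1 + 2 * s) * mgf (fun ω ↦ (isolCount ω : ℝ)) (gnp n p) s
      ≤ (gnp n p)[fun ω ↦ isolCount ω * exp (s * isolCount ω)] := by
  have := isProbabilityMeasure_gnp (n := n) hp
  have hpt (ω : EdgeIdx n → Bool) :
      n * (1 + 2 * s) * exp (s * isolCount ω) ≤ ∑ v, exp (s * isolCountDel ω v) := by
    have hsum : ∑ v, ((isolCountDel ω v : ℝ) - isolCount ω) ≤ 2 * n := by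
      have : ∑ v, (isolCountDel ω v : ℝ) ≤ n * isolCount ω + 2 * n := by
        exact_mod_cast sum_isolCountDel_le ω
      simp only [sum_sub_distrib, sum_const, card_univ, Fintype.card_fin, nsmul_eq_mul]
      linarith
    calc n * (1 + 2 * s) * exp (s * isolCount ω)
        = (Fintype.card (Fin n) + s * (2 * n)) * exp (s * isolCount ω) := by
          rw [Fintype.card_fin]
          ring
      _ ≤ ∑ v, exp (s * isolCountDel ω v) := card_add_mul_mul_exp_le_sum_exp hs _ hsum
  calc n * (1 - p) ^ (n - 1) * (1 + 2 * s) * mgf (fun ω ↦ (isolCount ω : ℝ)) (gnp n p) s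
      = (1 - p) ^ (n - 1) * ∫ ω, n * (1 + 2 * s) * exp (s * isolCount ω) ∂gnp n p := by
        rw [mgf, integral_const_mul]
        ring
    _ ≤ (1 - p) ^ (n - 1) * ∫ ω, ∑ v, exp (s * isolCountDel ω v) ∂gnp n p :=
        mul_le_mul_of_nonneg_left (integral_mono Integrable.of_finite Integrable.of_finite hpt)
          (pow_nonneg (sub_nonneg.2 hp.2) _)
    _ = _ := by
        rw [integral_finsetSum _ fun _ _ ↦ Integrable.of_finite,
          integral_isolCount_mul hp fun k ↦ exp (s * k)]

end Probability

theorem mgf_bound_nonpos_general (n : ℕ) (p : ℝ) (hp : p ∈ Set.Ioo (0 : ℝ) 1)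
    (μ σ : ℝ) (hμ : μ = (n : ℝ) * (1 - p) ^ (n - 1))
    (hσ : σ = Real.sqrt ((n : ℝ) * (1 - p) ^ (n - 1)
      * (1 + (n : ℝ) * p * (1 - p) ^ (n - 2) - (1 - p) ^ (n - 2))))
    (M : ℝ → ℝ)
    (hM : ∀ θ, M θ = ∫ ω, Real.exp (θ * ((isolCount ω : ℝ) - μ) / σ) ∂(gnp n p)) :
    ∀ θ : ℝ, θ ≤ 0 → M θ ≤ Real.exp (μ * θ ^ 2 / σ ^ 2) := by
  intro θ hθ
  have hp' : p ∈ Set.Icc 0 1 := Set.Ioo_subset_Icc_self hp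
  have := isProbabilityMeasure_gnp (n := n) hp'
  have hs : θ / σ ≤ 0 := div_nonpos_of_nonpos_of_nonneg hθ (hσ ▸ sqrt_nonneg _)
  have hmgf := mgf_le_exp_of_le_integral_mul_exp (fun _ ↦ Integrable.of_finite)
    (fun s hs ↦ mul_mgf_isolCount_le (n := n) hp' hs) hs
  rw [← hμ] at hmgf
  calc M θ
      = exp (-(μ * (θ / σ))) * mgf (fun ω ↦ (isolCount ω : ℝ)) (gnp n p) (θ / σ) := by
        rw [hM, mgf, ← integral_const_mul]
        congr with ω
        rw [← exp_add]
        ring_nf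
    _ ≤ exp (-(μ * (θ / σ))) * exp (μ * (θ / σ) + μ * (θ / σ) ^ 2) := by gcongr
    _ = exp (μ * θ ^ 2 / σ ^ 2) := by
        rw [← exp_add]
        ring_nf

/-- the mgf of the standardized number of isolated vertices satisfies
`M(θ) ≤ exp (μ θ² / σ²)` for `θ ≤ 0`. -/
theorem mgf_bound_nonpos (n : ℕ) (hn : 2 ≤ n) (p : ℝ) (hp : p ∈ Set.Ioo (0 : ℝ) 1)
    (μ σ : ℝ) (hμ : μ = (n : ℝ) * (1 - p) ^ (n - 1))
    (hσ : σ = Real.sqrt ((n : ℝ) * (1 - p) ^ (n - 1)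
      * (1 + (n : ℝ) * p * (1 - p) ^ (n - 2) - (1 - p) ^ (n - 2))))
    (M : ℝ → ℝ)
    (hM : ∀ θ, M θ = ∫ ω, Real.exp (θ * ((isolCount ω : ℝ) - μ) / σ) ∂(gnp n p)) :
    ∀ θ : ℝ, θ ≤ 0 → M θ ≤ Real.exp (μ * θ ^ 2 / σ ^ 2) :=
  mgf_bound_nonpos_general n p hp μ σ hμ hσ M hM

end ErdosRenyiIsolated
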